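/- arXiv:2512.02929 — 2 statements merged into one kernel-verified Lean document; each statement's English description precedes it below -/
import Mathlib

section
/- For a connected undirected graph with Laplacian L and any zero-sum vector x (i.e., 1ᵀx = 0), and any vertex v, if L_v denotes the principal submatrix of L obtained by deleting the row and column of v (which is invertible), then the vector L†x, restricted to the coordinates other than v, equals L_v⁻¹ x^(−v) − (1/n)·1·(1ᵀ L_v⁻¹ x^(−v)), where x^(−v) is x with its v-th entry deleted and L† is the Moore–Penrose pseudoinverse of L. -/
open Matrix BigOperators

/-- `B` is the Moore–Penrose pseudoinverse of `A`. -/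
def IsMoorePenrose {n : Type*} [Fintype n] [DecidableEq n]
    (A B : Matrix n n ℝ) : Prop :=
  A * B * A = A ∧ B * A * B = B ∧ (A * B)ᵀ = A * B ∧ (B * A)ᵀ = B * A

/-!
Let `z = L_v⁻¹ x^(-v)` and let `ẑ` be `z` extended by `0` at `v`. The rows of `L ẑ` other than
`v` are `L_v z = x^(-v)`; since the columns of `L` and the entries of `x` both sum to zero, also
the row `v` agrees, so `L ẑ = x`. Hence `L† x = L† L ẑ`, and `L† L` is the orthogonal projection
onto `1^⊥`: indeed `L (L† L ẑ - ẑ) = 0` forces `L† L ẑ - ẑ` to be constant on a connected graph,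
while `L† L` symmetric and `L 1 = 0` give `1ᵀ L† L ẑ = 0`. So `L† x = ẑ - (1/n)(1ᵀ ẑ) 1`.
-/

section Matrix

lemma sum_mulVec_eq_zero_of_one_vecMul {V : Type*} [Fintype V] {A : Matrix V V ℝ}
    (hA : 1 ᵥ* A = 0) (y : V → ℝ) : ∑ i, (A *ᵥ y) i = 0 := by
  simpa [dotProduct, hA] using dotProduct_mulVec 1 A y

variable {V : Type*} [DecidableEq V]

def extendByZero (v : V) (z : {u : V // u ≠ v} → ℝ) : V → ℝ :=
  fun i => if h : i = v then 0 else z ⟨i, h⟩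

@[simp]
lemma extendByZero_self (v : V) (z : {u : V // u ≠ v} → ℝ) : extendByZero v z v = 0 := by
  simp [extendByZero]

@[simp]
lemma extendByZero_val (v : V) (z : {u : V // u ≠ v} → ℝ) (u : {u : V // u ≠ v}) :
    extendByZero v z u = z u := by
  simp [extendByZero, u.2]

variable [Fintype V]

lemma sum_extendByZero (v : V) (z : {u : V // u ≠ v} → ℝ) :
    ∑ i, extendByZero v z i = ∑ u, z u := by
  simp [Fintype.sum_eq_add_sum_subtype_ne _ v]

lemma mulVec_extendByZero_val (A : Matrix V V ℝ) (v : V) (z : {u : V // u ≠ v} → ℝ)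
    (u : {u : V // u ≠ v}) :
    (A *ᵥ extendByZero v z) u = (A.submatrix Subtype.val Subtype.val *ᵥ z) u := by
  simp [mulVec, dotProduct, Fintype.sum_eq_add_sum_subtype_ne _ v]

lemma mulVec_extendByZero_eq {A : Matrix V V ℝ} (hA : 1 ᵥ* A = 0) {v : V}
    {z : {u : V // u ≠ v} → ℝ} {x : V → ℝ} (hx : ∑ i, x i = 0)
    (hz : A.submatrix Subtype.val Subtype.val *ᵥ z = fun u : {u : V // u ≠ v} => x u) :
    A *ᵥ extendByZero v z = x := by
  have hoff (u : {u : V // u ≠ v}) : (A *ᵥ extendByZero v z) u = x u := by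
    rw [mulVec_extendByZero_val, hz]
  funext i
  by_cases hi : i = v
  · have hsum := sum_mulVec_eq_zero_of_one_vecMul hA (extendByZero v z)
    rw [Fintype.sum_eq_add_sum_subtype_ne _ v, Finset.sum_congr rfl fun u _ => hoff u] at hsum
    rw [Fintype.sum_eq_add_sum_subtype_ne _ v] at hx
    rw [hi]
    linarith
  · exact hoff ⟨i, hi⟩

lemma IsMoorePenrose.sum_mulVec_mul_mulVec {A B : Matrix V V ℝ} (hAB : IsMoorePenrose A B)
    (hA : A *ᵥ 1 = 0) (y : V → ℝ) : ∑ i, (B *ᵥ (A *ᵥ y)) i = 0 := by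
  rw [mulVec_mulVec]
  refine sum_mulVec_eq_zero_of_one_vecMul ?_ y
  rw [← mulVec_transpose, hAB.2.2.2, ← mulVec_mulVec, hA, mulVec_zero]

end Matrix

namespace SimpleGraph

variable {V : Type*} [Fintype V] [DecidableEq V] (G : SimpleGraph V) [DecidableRel G.Adj]

lemma one_vecMul_lapMatrix : 1 ᵥ* G.lapMatrix ℝ = 0 := by
  rw [← mulVec_transpose, G.isSymm_lapMatrix ℝ]
  exact G.lapMatrix_mulVec_const_eq_zero

lemma pinv_mulVec_lapMatrix_mulVec (hconn : G.Connected) {Ld : Matrix V V ℝ}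
    (hLd : IsMoorePenrose (G.lapMatrix ℝ) Ld) (z : V → ℝ) (i : V) :
    (Ld *ᵥ (G.lapMatrix ℝ *ᵥ z)) i = z i - (Fintype.card V : ℝ)⁻¹ * ∑ j, z j := by
  set w := Ld *ᵥ (G.lapMatrix ℝ *ᵥ z)
  have hker : G.lapMatrix ℝ *ᵥ (w - z) = 0 := by
    rw [mulVec_sub, mulVec_mulVec, mulVec_mulVec, hLd.1, sub_self]
  have hconst (j : V) : w j - z j = w i - z i :=
    G.lapMatrix_mulVec_eq_zero_iff_forall_reachable.mp hker j i (hconn.preconnected j i)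
  have hw : ∑ j, w j = 0 := hLd.sum_mulVec_mul_mulVec G.lapMatrix_mulVec_const_eq_zero z
  have hsum : ∑ j, w j = ∑ j, z j + Fintype.card V * (w i - z i) := by
    rw [← Finset.sum_congr rfl fun j _ => (add_sub_cancel (z j) (w j)),
      Finset.sum_add_distrib, Finset.sum_congr rfl fun j _ => hconst j]
    simp only [Finset.sum_const, Finset.card_univ, nsmul_eq_mul]
  have : Nonempty V := hconn.nonempty
  have hV : (Fintype.card V : ℝ) ≠ 0 := Nat.cast_ne_zero.mpr Fintype.card_ne_zero
  rw [hw] at hsum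
  field_simp
  linarith

end SimpleGraph

theorem stmt0 {n : ℕ} (G : SimpleGraph (Fin n)) [DecidableRel G.Adj]
    (hconn : G.Connected)
    (Ld : Matrix (Fin n) (Fin n) ℝ) (hLd : IsMoorePenrose (G.lapMatrix ℝ) Ld)
    (x : Fin n → ℝ) (hx : ∑ i, x i = 0)
    (v : Fin n)
    (Lv : Matrix {u : Fin n // u ≠ v} {u : Fin n // u ≠ v} ℝ)
    (hLv : Lv = (G.lapMatrix ℝ).submatrix (Subtype.val : {u : Fin n // u ≠ v} → Fin n) Subtype.val)
    (hinv : IsUnit Lv) :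
    ∀ u : {u : Fin n // u ≠ v},
      Ld.mulVec x u.val =
        Lv⁻¹.mulVec (fun w => x w.val) u
          - (1 / (n : ℝ)) * ∑ w, Lv⁻¹.mulVec (fun w => x w.val) w := by
  intro u
  set z := Lv⁻¹ *ᵥ fun w => x w.val
  have hz : Lv *ᵥ z = fun w => x w.val := by
    rw [mulVec_mulVec, mul_nonsing_inv _ ((isUnit_iff_isUnit_det _).mp hinv), one_mulVec]
  have hLz : G.lapMatrix ℝ *ᵥ extendByZero v z = x :=
    mulVec_extendByZero_eq G.one_vecMul_lapMatrix hx (hLv ▸ hz)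
  rw [← hLz, G.pinv_mulVec_lapMatrix_mulVec hconn hLd, extendByZero_val, sum_extendByZero,
    Fintype.card_fin, one_div]
end

section
/- For a connected undirected graph with Laplacian L and any two vertices s, t, and any vertex v, the biharmonic distance satisfies b(s,t) = ‖L_v⁻¹(e_s − e_t)‖₂² − (1/n)(1ᵀ L_v⁻¹(e_s − e_t))², where b(s,t) = (e_s − e_t)ᵀ (L†)² (e_s − e_t) and L_v is the grounded Laplacian obtained by deleting row and column v (assuming s, t ≠ v). -/
open Matrix BigOperators

namespace IsMoorePenrose

variable {m : Type*} [Fintype m] [DecidableEq m] {A B C : Matrix m m ℝ}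

theorem transpose (h : IsMoorePenrose A B) : IsMoorePenrose Aᵀ Bᵀ := by
  obtain ⟨h1, h2, h3, h4⟩ := h
  refine ⟨?_, ?_, ?_, ?_⟩
  · rw [← transpose_mul, ← transpose_mul, ← Matrix.mul_assoc, h1]
  · rw [← transpose_mul, ← transpose_mul, ← Matrix.mul_assoc, h2]
  · rw [← transpose_mul, transpose_transpose, h4]
  · rw [← transpose_mul, transpose_transpose, h3]

theorem mul_left_eq (hB : IsMoorePenrose A B) (hC : IsMoorePenrose A C) : A * B = A * C :=
  calc A * B = (A * C)ᵀ * (A * B)ᵀ := by rw [hB.2.2.1, hC.2.2.1, ← Matrix.mul_assoc, hC.1]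
    _ = (A * B * A * C)ᵀ := by rw [← transpose_mul, Matrix.mul_assoc (A * B)]
    _ = A * C := by rw [hB.1, hC.2.2.1]

theorem unique (hB : IsMoorePenrose A B) (hC : IsMoorePenrose A C) : B = C := by
  have hBA : B * A = C * A := by
    simpa only [← transpose_mul, transpose_inj] using hB.transpose.mul_left_eq hC.transpose
  calc B = B * A * B := hB.2.1.symm
    _ = C * A * C := by rw [Matrix.mul_assoc, hB.mul_left_eq hC, ← Matrix.mul_assoc, hBA]
    _ = C := hC.2.1

theorem isSymm (h : IsMoorePenrose A B) (hA : A.IsSymm) : B.IsSymm :=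
  (hA.eq ▸ h.transpose).unique h

theorem eq_transpose_mul (h : IsMoorePenrose A B) : B = Aᵀ * (Bᵀ * B) := by
  rw [← Matrix.mul_assoc, ← transpose_mul, h.2.2.2, h.2.1]

end IsMoorePenrose

section Grounded

variable {V R M : Type*} [Fintype V] [DecidableEq V] [CommRing R] [AddCommMonoid M]

def Matrix.grounded (A : Matrix V V R) (v : V) : Matrix {u // u ≠ v} {u // u ≠ v} R :=
  A.submatrix Subtype.val Subtype.val

theorem Fintype.sum_extend_subtype_ne (v : V) (y : {u // u ≠ v} → R) (F : V → R → M)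
    (hF : F v 0 = 0) :
    ∑ u, F u (Function.extend Subtype.val y 0 u) = ∑ w : {u // u ≠ v}, F w (y w) := by
  rw [Fintype.sum_eq_add_sum_subtype_ne _ v,
    Function.extend_apply' _ _ _ (fun ⟨w, hw⟩ => w.2 hw), Pi.zero_apply, hF, zero_add]
  simp only [Subtype.val_injective.extend_apply]

theorem Matrix.mulVec_extend_subtype_ne (A : Matrix V V R) (v : V) (y : {u // u ≠ v} → R)
    (w : {u // u ≠ v}) :
    (A *ᵥ Function.extend Subtype.val y 0) w = (A.grounded v *ᵥ y) w :=
  Fintype.sum_extend_subtype_ne v y (fun u r => A w u * r) (mul_zero _)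

theorem Matrix.mulVec_extend_grounded_inv_mulVec {A : Matrix V V R}
    (hA : ∀ y, ∑ i, (A *ᵥ y) i = 0) {v : V} (hv : IsUnit (A.grounded v))
    {x : V → R} (hx : ∑ i, x i = 0) :
    A *ᵥ Function.extend Subtype.val ((A.grounded v)⁻¹ *ᵥ fun u => x u.val) 0 = x := by
  set z := Function.extend Subtype.val ((A.grounded v)⁻¹ *ᵥ fun u => x u.val) 0
  have hoff : ∀ w : {u // u ≠ v}, (A *ᵥ z) w = x w := fun w => by
    rw [A.mulVec_extend_subtype_ne, mulVec_mulVec,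
      mul_nonsing_inv _ ((isUnit_iff_isUnit_det _).mp hv), one_mulVec]
  have hsum := hA z
  rw [← hx, Fintype.sum_eq_add_sum_subtype_ne _ v, Fintype.sum_eq_add_sum_subtype_ne x v] at hsum
  simp only [hoff, add_left_inj] at hsum
  funext u
  by_cases hu : u = v
  · exact hu ▸ hsum
  · exact hoff ⟨u, hu⟩

end Grounded

theorem SimpleGraph.sum_lapMatrix_mulVec {V : Type*} [Fintype V] [DecidableEq V]
    (G : SimpleGraph V) [DecidableRel G.Adj] (y : V → ℝ) :
    ∑ i, (G.lapMatrix ℝ *ᵥ y) i = 0 := by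
  rw [← one_dotProduct, dotProduct_mulVec, ← mulVec_transpose, G.isSymm_lapMatrix ℝ,
    Pi.one_def, lapMatrix_mulVec_const_eq_zero, zero_dotProduct]

theorem SimpleGraph.Connected.exists_eq_add_const_of_lapMatrix_mulVec_eq {V : Type*} [Fintype V]
    [DecidableEq V] {G : SimpleGraph V} [DecidableRel G.Adj] (hG : G.Connected) {w z : V → ℝ}
    (h : G.lapMatrix ℝ *ᵥ w = G.lapMatrix ℝ *ᵥ z) : ∃ c, ∀ i, w i = z i + c := by
  obtain ⟨v⟩ := hG.nonempty
  have hker : G.lapMatrix ℝ *ᵥ (w - z) = 0 := by rw [mulVec_sub, h, sub_self]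
  refine ⟨w v - z v, fun i => ?_⟩
  have := G.lapMatrix_mulVec_eq_zero_iff_forall_reachable.mp hker i v (hG i v)
  simp only [Pi.sub_apply] at this
  linarith

theorem sum_sq_eq_of_eq_add_const_of_sum_eq_zero {ι : Type*} [Fintype ι] {w z : ι → ℝ}
    {c : ℝ} (hwz : ∀ i, w i = z i + c) (hw : ∑ i, w i = 0) :
    ∑ i, w i ^ 2 = ∑ i, z i ^ 2 - 1 / (Fintype.card ι : ℝ) * (∑ i, z i) ^ 2 := by
  have hS : ∑ i, z i = -(Fintype.card ι * c) := by
    simpa [hwz, Finset.sum_add_distrib, eq_neg_iff_add_eq_zero] using hw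
  have hexp : ∑ i, w i ^ 2 = ∑ i, z i ^ 2 + 2 * c * ∑ i, z i + Fintype.card ι * c ^ 2 := by
    simp only [hwz, add_sq, Finset.sum_add_distrib, ← Finset.sum_mul, ← Finset.mul_sum,
      Finset.sum_const, Finset.card_univ, nsmul_eq_mul]
    ring
  rw [hexp, hS]
  rcases eq_or_ne (Fintype.card ι : ℝ) 0 with h | h
  · simp [h]
  · field_simp
    ring

theorem stmt1_general {n : ℕ} (G : SimpleGraph (Fin n)) [DecidableRel G.Adj]
    (hconn : G.Connected)
    (Ld : Matrix (Fin n) (Fin n) ℝ) (hLd : IsMoorePenrose (G.lapMatrix ℝ) Ld)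
    (s t v : Fin n)
    (Lv : Matrix {u : Fin n // u ≠ v} {u : Fin n // u ≠ v} ℝ)
    (hLv : Lv = (G.lapMatrix ℝ).submatrix
      (Subtype.val : {u : Fin n // u ≠ v} → Fin n) Subtype.val)
    (hinv : IsUnit Lv)
    (x : Fin n → ℝ)
    (hxdef : x = fun i => (if i = s then (1 : ℝ) else 0) - (if i = t then 1 else 0)) :
    x ⬝ᵥ (Ld * Ld).mulVec x =
      ∑ w, (Lv⁻¹.mulVec (fun u => x u.val) w) ^ 2
        - (1 / (n : ℝ)) * (∑ w, Lv⁻¹.mulVec (fun u => x u.val) w) ^ 2 := by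
  set L := G.lapMatrix ℝ
  set z := Function.extend Subtype.val (Lv⁻¹ *ᵥ fun u => x u.val) 0
  have hx : ∑ i, x i = 0 := by simp [hxdef, Finset.sum_sub_distrib]
  have hLz : L *ᵥ z = x := by
    subst hLv
    exact L.mulVec_extend_grounded_inv_mulVec G.sum_lapMatrix_mulVec hinv hx
  have hLw : L *ᵥ (Ld *ᵥ x) = x := by
    rw [← hLz, mulVec_mulVec, mulVec_mulVec, hLd.1]
  have hw : ∑ i, (Ld *ᵥ x) i = 0 := by
    rw [hLd.eq_transpose_mul, G.isSymm_lapMatrix ℝ, ← mulVec_mulVec, G.sum_lapMatrix_mulVec]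
  obtain ⟨c, hwz⟩ := hconn.exists_eq_add_const_of_lapMatrix_mulVec_eq (hLw.trans hLz.symm)
  have hsym : x ⬝ᵥ (Ld * Ld) *ᵥ x = ∑ i, (Ld *ᵥ x) i ^ 2 := by
    rw [← mulVec_mulVec, dotProduct_mulVec, ← mulVec_transpose,
      (hLd.isSymm (G.isSymm_lapMatrix ℝ)).eq]
    simp only [dotProduct, sq]
  rw [hsym, sum_sq_eq_of_eq_add_const_of_sum_eq_zero hwz hw, Fintype.card_fin,
    Fintype.sum_extend_subtype_ne v _ (fun _ r => r ^ 2) (zero_pow two_ne_zero),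
    Fintype.sum_extend_subtype_ne v _ (fun _ r => r) rfl]

theorem stmt1 {n : ℕ} (G : SimpleGraph (Fin n)) [DecidableRel G.Adj]
    (hconn : G.Connected)
    (Ld : Matrix (Fin n) (Fin n) ℝ) (hLd : IsMoorePenrose (G.lapMatrix ℝ) Ld)
    (s t v : Fin n) (hs : s ≠ v) (ht : t ≠ v)
    (Lv : Matrix {u : Fin n // u ≠ v} {u : Fin n // u ≠ v} ℝ)
    (hLv : Lv = (G.lapMatrix ℝ).submatrix
      (Subtype.val : {u : Fin n // u ≠ v} → Fin n) Subtype.val)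
    (hinv : IsUnit Lv)
    (x : Fin n → ℝ)
    (hxdef : x = fun i => (if i = s then (1 : ℝ) else 0) - (if i = t then 1 else 0)) :
    x ⬝ᵥ (Ld * Ld).mulVec x =
      ∑ w, (Lv⁻¹.mulVec (fun u => x u.val) w) ^ 2
        - (1 / (n : ℝ)) * (∑ w, Lv⁻¹.mulVec (fun u => x u.val) w) ^ 2 :=
  stmt1_general G hconn Ld hLd s t v Lv hLv hinv x hxdef
end
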